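/- arXiv:2603.17297 — 2 statements merged into one kernel-verified Lean document; each statement's English description precedes it below -/
import Mathlib

section
/- Given the exact path differences Δr_{m,n} for at least three elements with index vectors (m, n) such that the 4-column matrix with rows [2dm, 2dn, 2Δr_{m,n}, -(m²+n²)d² + Δr_{m,n}²] has rank 3, the null vector f (up to scale) recovers the parameters via cosφ = f₂/f₃, sinφ cosθ = f₁/f₃ (with appropriate sign conventions) and r = f₃/f₄. -/
/-!
The vector `v = (r sinφ cosθ, r cosφ, r, 1)` is a null vector of `P`: expanding
`(Δr_{m,n} + r)² = r_{m,n}²` gives exactly the linear equation of row `(m, n)`. Rank 3 makes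
the kernel of the 4-column matrix `P` a line, so every nonzero null vector `f` is `t • v` with
`t ≠ 0`, and the parameters are read off as ratios of its coordinates.
-/

open Matrix

theorem Matrix.exists_eq_smul_of_mulVec_eq_zero {K m n : Type*} [Field K] [Fintype n]
    (P : Matrix m n K) (hrank : P.rank + 1 = Fintype.card n) {v f : n → K} (hv : v ≠ 0)
    (hPv : P *ᵥ v = 0) (hPf : P *ᵥ f = 0) : ∃ t : K, f = t • v := by
  have hker : Module.finrank K (LinearMap.ker P.mulVecLin) = 1 := by
    have h := LinearMap.finrank_range_add_finrank_ker P.mulVecLin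
    rw [Module.finrank_fintype_fun_eq_card] at h
    rw [Matrix.rank] at hrank
    omega
  obtain ⟨t, ht⟩ := (finrank_eq_one_iff_of_nonzero' (⟨v, hPv⟩ : LinearMap.ker P.mulVecLin)
    (fun h => hv (congrArg Subtype.val h))).mp hker ⟨f, hPf⟩
  exact ⟨t, congrArg Subtype.val ht.symm⟩

/-- `r_{m,n}²` is the squared distance from the element `(m d, n d, 0)` to the source at
spherical coordinates `(r, φ, θ)`. -/
theorem sq_dist_eq_sum_sq (r d φ θ m n : ℝ) :
    r ^ 2 - 2 * d * r * (m * Real.sin φ * Real.cos θ + n * Real.cos φ) + (m ^ 2 + n ^ 2) * d ^ 2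
      = (r * Real.sin φ * Real.cos θ - m * d) ^ 2 + (r * Real.cos φ - n * d) ^ 2
        + (r * Real.sin φ * Real.sin θ) ^ 2 := by
  linear_combination (-(r ^ 2)) * Real.sin_sq_add_cos_sq φ
    - r ^ 2 * Real.sin φ ^ 2 * Real.sin_sq_add_cos_sq θ

theorem pathDifference_linear_eq {r d φ θ m n Δ : ℝ}
    (hΔ : Δ = Real.sqrt (r ^ 2 - 2 * d * r * (m * Real.sin φ * Real.cos θ + n * Real.cos φ)
      + (m ^ 2 + n ^ 2) * d ^ 2) - r) :
    2 * d * m * (r * (Real.sin φ * Real.cos θ)) + 2 * d * n * (r * Real.cos φ) + 2 * Δ * r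
      + (-(m ^ 2 + n ^ 2) * d ^ 2 + Δ ^ 2) * 1 = 0 := by
  have hsq : (Δ + r) ^ 2 = r ^ 2 - 2 * d * r * (m * Real.sin φ * Real.cos θ + n * Real.cos φ)
      + (m ^ 2 + n ^ 2) * d ^ 2 := by
    rw [hΔ, sub_add_cancel, Real.sq_sqrt (by rw [sq_dist_eq_sum_sq]; positivity)]
  linear_combination hsq

theorem stmt_7_general {ι : Type*} [Fintype ι] (idx : ι → ℤ × ℤ)
    (r d φ θ : ℝ) (hr : 0 < r)
    (Δ : ι → ℝ)
    (hΔ : ∀ i, Δ i = Real.sqrt (r ^ 2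
        - 2 * d * r * (((idx i).1 : ℝ) * Real.sin φ * Real.cos θ + ((idx i).2 : ℝ) * Real.cos φ)
        + ((((idx i).1 : ℝ)) ^ 2 + (((idx i).2 : ℝ)) ^ 2) * d ^ 2) - r)
    (P : Matrix ι (Fin 4) ℝ)
    (hP : ∀ i, P i = ![2 * d * ((idx i).1 : ℝ), 2 * d * ((idx i).2 : ℝ), 2 * Δ i,
        -((((idx i).1 : ℝ)) ^ 2 + (((idx i).2 : ℝ)) ^ 2) * d ^ 2 + (Δ i) ^ 2])
    (hrank : P.rank = 3) :
    ∀ f : Fin 4 → ℝ, f ≠ 0 → P *ᵥ f = 0 →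
      f 2 ≠ 0 ∧ f 3 ≠ 0 ∧
      Real.cos φ = f 1 / f 2 ∧
      Real.sin φ * Real.cos θ = f 0 / f 2 ∧
      r = f 2 / f 3 := by
  intro f hf hPf
  set v : Fin 4 → ℝ := ![r * (Real.sin φ * Real.cos θ), r * Real.cos φ, r, 1]
  have hPv : P *ᵥ v = 0 := by
    funext i
    simpa [mulVec, dotProduct, Fin.sum_univ_four, hP i, v] using
      pathDifference_linear_eq (hΔ i)
  obtain ⟨t, rfl⟩ := P.exists_eq_smul_of_mulVec_eq_zero (by simp [hrank]) (v := v)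
    (fun h => one_ne_zero (congrFun h 3)) hPv hPf
  have ht : t ≠ 0 := by rintro rfl; exact hf (zero_smul ℝ v)
  simp only [Pi.smul_apply, smul_eq_mul, v, cons_val]
  refine ⟨mul_ne_zero ht hr.ne', by simpa using ht, ?_, ?_, ?_⟩ <;> field_simp

/-- Identifiability from the exact path differences: if the 4-column matrix `P` with rows
`[2dm, 2dn, 2Δr_{m,n}, -(m²+n²)d² + Δr_{m,n}²]` (over at least three element indices)
has rank 3, then any nonzero null vector `f` of `P` recovers the parameters via
`cosφ = f₂/f₃`, `sinφ cosθ = f₁/f₃`, and `r = f₃/f₄`. -/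
theorem stmt_7 {ι : Type*} [Fintype ι] (idx : ι → ℤ × ℤ) (hcard : 3 ≤ Fintype.card ι)
    (r d φ θ : ℝ) (hr : 0 < r) (hd : 0 < d)
    (Δ : ι → ℝ)
    (hΔ : ∀ i, Δ i = Real.sqrt (r ^ 2
        - 2 * d * r * (((idx i).1 : ℝ) * Real.sin φ * Real.cos θ + ((idx i).2 : ℝ) * Real.cos φ)
        + ((((idx i).1 : ℝ)) ^ 2 + (((idx i).2 : ℝ)) ^ 2) * d ^ 2) - r)
    (P : Matrix ι (Fin 4) ℝ)
    (hP : ∀ i, P i = ![2 * d * ((idx i).1 : ℝ), 2 * d * ((idx i).2 : ℝ), 2 * Δ i,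
        -((((idx i).1 : ℝ)) ^ 2 + (((idx i).2 : ℝ)) ^ 2) * d ^ 2 + (Δ i) ^ 2])
    (hrank : P.rank = 3) :
    ∀ f : Fin 4 → ℝ, f ≠ 0 → P *ᵥ f = 0 →
      f 2 ≠ 0 ∧ f 3 ≠ 0 ∧
      Real.cos φ = f 1 / f 2 ∧
      Real.sin φ * Real.cos θ = f 0 / f 2 ∧
      r = f 2 / f 3 :=
  stmt_7_general idx r d φ θ hr Δ hΔ P hP hrank
end

section
/- For uncorrelated zero-mean sources s_k(t) and zero-mean noise independent of the sources, the cross-correlation E{y_{m,n}(t+τ) y*_{-m,-n}(t)} at nonzero lag τ equals δ Σ_k exp(j(4π/λ)(g_x^k m + g_z^k n)) ρ_k(τ), where ρ_k(τ) = E{s_k(t+τ)s_k*(t)}, under the Fresnel model. -/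
open MeasureTheory Complex

/-- For uncorrelated zero-mean sources and noise that is uncorrelated (at nonzero lag) and
uncorrelated with the sources, the delay-based cross-correlation of centrally symmetric
HRIS elements under the Fresnel model equals
`δ Σ_k exp(j(4π/λ)(g_x^k m + g_z^k n)) ρ_k(τ)`. -/
theorem stmt_9 {Ω : Type*} [MeasurableSpace Ω] (μ : Measure Ω) [IsProbabilityMeasure μ]
    (K : ℕ) (lam δ : ℝ) (hδ : 0 ≤ δ) (hlam : lam ≠ 0)
    (gx gz px pz al : Fin K → ℝ)
    (s : Fin K → ℝ → Ω → ℂ) (ζ : ℤ → ℤ → ℝ → Ω → ℂ)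
    (a : Fin K → ℤ → ℤ → ℂ)
    (ha : ∀ k m n, a k m n = Complex.exp (Complex.I * ((2 * Real.pi / lam) *
      (gx k * (m : ℝ) + gz k * (n : ℝ) + px k * (m : ℝ) ^ 2 + pz k * (n : ℝ) ^ 2
        + al k * (m : ℝ) * (n : ℝ)) : ℝ)))
    (y : ℤ → ℤ → ℝ → Ω → ℂ)
    (hy : ∀ m n t ω, y m n t ω
      = (Real.sqrt δ : ℂ) * (∑ k, a k m n * s k t ω) + ζ m n t ω)
    (t τ : ℝ) (hτ : τ ≠ 0)
    (ρ : Fin K → ℂ)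
    (hρ : ∀ k, ρ k = ∫ ω, s k (t + τ) ω * (starRingEnd ℂ) (s k t ω) ∂μ)
    -- uncorrelated sources
    (hcross : ∀ k j : Fin K, k ≠ j →
      (∫ ω, s k (t + τ) ω * (starRingEnd ℂ) (s j t ω) ∂μ) = 0)
    -- noise uncorrelated with sources
    (hsζ : ∀ (k : Fin K) (m n : ℤ),
      (∫ ω, s k (t + τ) ω * (starRingEnd ℂ) (ζ m n t ω) ∂μ) = 0)
    (hζs : ∀ (k : Fin K) (m n : ℤ),
      (∫ ω, ζ m n (t + τ) ω * (starRingEnd ℂ) (s k t ω) ∂μ) = 0)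
    -- white noise: uncorrelated at nonzero lag
    (hζζ : ∀ m n m' n' : ℤ,
      (∫ ω, ζ m n (t + τ) ω * (starRingEnd ℂ) (ζ m' n' t ω) ∂μ) = 0)
    -- integrability of all product terms
    (hi1 : ∀ k j : Fin K,
      Integrable (fun ω => s k (t + τ) ω * (starRingEnd ℂ) (s j t ω)) μ)
    (hi2 : ∀ (k : Fin K) (m n : ℤ),
      Integrable (fun ω => s k (t + τ) ω * (starRingEnd ℂ) (ζ m n t ω)) μ)
    (hi3 : ∀ (k : Fin K) (m n : ℤ),
      Integrable (fun ω => ζ m n (t + τ) ω * (starRingEnd ℂ) (s k t ω)) μ)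
    (hi4 : ∀ m n m' n' : ℤ,
      Integrable (fun ω => ζ m n (t + τ) ω * (starRingEnd ℂ) (ζ m' n' t ω)) μ) :
    ∀ m n : ℤ,
      (∫ ω, y m n (t + τ) ω * (starRingEnd ℂ) (y (-m) (-n) t ω) ∂μ)
        = (δ : ℂ) * ∑ k, Complex.exp (Complex.I * ((4 * Real.pi / lam) *
            (gx k * (m : ℝ) + gz k * (n : ℝ)) : ℝ)) * ρ k := by
  intro m n
  have hδc : ((Real.sqrt δ : ℝ) : ℂ) * ((Real.sqrt δ : ℝ) : ℂ) = (δ : ℂ) := by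
    rw [← Complex.ofReal_mul, Real.mul_self_sqrt hδ]
  have hexpand : ∀ ω : Ω,
      y m n (t + τ) ω * (starRingEnd ℂ) (y (-m) (-n) t ω)
      = (∑ k, ∑ j, ((δ : ℂ) * (a k m n * (starRingEnd ℂ) (a j (-m) (-n)))) *
            (s k (t + τ) ω * (starRingEnd ℂ) (s j t ω)))
        + ((∑ k, ((Real.sqrt δ : ℂ) * a k m n) *
            (s k (t + τ) ω * (starRingEnd ℂ) (ζ (-m) (-n) t ω)))
        + ((∑ j, ((Real.sqrt δ : ℂ) * (starRingEnd ℂ) (a j (-m) (-n))) *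
            (ζ m n (t + τ) ω * (starRingEnd ℂ) (s j t ω)))
        + ζ m n (t + τ) ω * (starRingEnd ℂ) (ζ (-m) (-n) t ω))) := by
    intro ω
    rw [hy, hy]
    simp only [map_add, map_mul, map_sum, Complex.conj_ofReal]
    rw [add_mul, mul_add, mul_add, add_assoc]
    congr 1
    · rw [mul_mul_mul_comm, hδc, Finset.sum_mul_sum, Finset.mul_sum]
      exact Finset.sum_congr rfl fun k _ => by
        rw [Finset.mul_sum]
        exact Finset.sum_congr rfl fun j _ => by ring
    · congr 1
      · rw [Finset.mul_sum, Finset.sum_mul]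
        exact Finset.sum_congr rfl fun k _ => by ring
      · congr 1
        rw [Finset.mul_sum, Finset.mul_sum]
        exact Finset.sum_congr rfl fun j _ => by ring
  have hint1 : Integrable (fun ω => ∑ k, ∑ j,
      ((δ : ℂ) * (a k m n * (starRingEnd ℂ) (a j (-m) (-n)))) *
        (s k (t + τ) ω * (starRingEnd ℂ) (s j t ω))) μ := by
    apply integrable_finset_sum _ fun k _ => integrable_finset_sum _ fun j _ =>
      (hi1 k j).const_mul _
  have hint2 : Integrable (fun ω => ∑ k, ((Real.sqrt δ : ℂ) * a k m n) *
      (s k (t + τ) ω * (starRingEnd ℂ) (ζ (-m) (-n) t ω))) μ :=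
    integrable_finset_sum _ fun k _ => (hi2 k (-m) (-n)).const_mul _
  have hint3 : Integrable (fun ω => ∑ j, ((Real.sqrt δ : ℂ) * (starRingEnd ℂ) (a j (-m) (-n))) *
      (ζ m n (t + τ) ω * (starRingEnd ℂ) (s j t ω))) μ :=
    integrable_finset_sum _ fun j _ => (hi3 j m n).const_mul _
  calc ∫ ω, y m n (t + τ) ω * (starRingEnd ℂ) (y (-m) (-n) t ω) ∂μ
      = ∫ ω, ((∑ k, ∑ j, ((δ : ℂ) * (a k m n * (starRingEnd ℂ) (a j (-m) (-n)))) *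
            (s k (t + τ) ω * (starRingEnd ℂ) (s j t ω)))
        + ((∑ k, ((Real.sqrt δ : ℂ) * a k m n) *
            (s k (t + τ) ω * (starRingEnd ℂ) (ζ (-m) (-n) t ω)))
        + ((∑ j, ((Real.sqrt δ : ℂ) * (starRingEnd ℂ) (a j (-m) (-n))) *
            (ζ m n (t + τ) ω * (starRingEnd ℂ) (s j t ω)))
        + ζ m n (t + τ) ω * (starRingEnd ℂ) (ζ (-m) (-n) t ω)))) ∂μ := by
          exact integral_congr_ae (Filter.Eventually.of_forall hexpand)
    _ = (δ : ℂ) * ∑ k, Complex.exp (Complex.I * ((4 * Real.pi / lam) *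
          (gx k * (m : ℝ) + gz k * (n : ℝ)) : ℝ)) * ρ k := by
        have h34 : Integrable (fun ω =>
            (∑ j, ((Real.sqrt δ : ℂ) * (starRingEnd ℂ) (a j (-m) (-n))) *
              (ζ m n (t + τ) ω * (starRingEnd ℂ) (s j t ω)))
            + ζ m n (t + τ) ω * (starRingEnd ℂ) (ζ (-m) (-n) t ω)) μ :=
          hint3.add (hi4 m n (-m) (-n))
        have h234 : Integrable (fun ω =>
            (∑ k, ((Real.sqrt δ : ℂ) * a k m n) *
              (s k (t + τ) ω * (starRingEnd ℂ) (ζ (-m) (-n) t ω)))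
            + ((∑ j, ((Real.sqrt δ : ℂ) * (starRingEnd ℂ) (a j (-m) (-n))) *
              (ζ m n (t + τ) ω * (starRingEnd ℂ) (s j t ω)))
            + ζ m n (t + τ) ω * (starRingEnd ℂ) (ζ (-m) (-n) t ω))) μ :=
          hint2.add h34
        rw [integral_add hint1 h234,
            integral_add hint2 h34,
            integral_add hint3 (hi4 m n (-m) (-n)),
            integral_finset_sum _ (fun k _ => integrable_finset_sum _ fun j _ => (hi1 k j).const_mul _),
            integral_finset_sum _ (fun k _ => (hi2 k (-m) (-n)).const_mul _),
            integral_finset_sum _ (fun j _ => (hi3 j m n).const_mul _),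
            hζζ m n (-m) (-n)]
        simp only [integral_const_mul, hsζ, hζs, mul_zero, Finset.sum_const_zero,
          add_zero]
        rw [Finset.mul_sum]
        refine Finset.sum_congr rfl fun k _ => ?_
        rw [integral_finset_sum _ (fun j _ => (hi1 k j).const_mul _)]
        rw [Finset.sum_eq_single k]
        · rw [integral_const_mul, ← hρ k, ha, ha, ← Complex.exp_conj, ← Complex.exp_add]
          rw [mul_assoc]
          congr 2
          rw [map_mul, Complex.conj_I, Complex.conj_ofReal]
          push_cast
          ring_nf
        · intro j _ hjk
          rw [integral_const_mul, hcross k j (Ne.symm hjk), mul_zero]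
        · intro h; exact absurd (Finset.mem_univ k) h
end
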